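/- For all integers n ≥ 1 and j ≥ 1, the following identity holds in ℤ[q]: ∑_{r=0}^{n} (−1)^r · q^{r²−r} · [n choose r]_{q²} · [2n+j−2r−1 choose n−1]_q = 0; equivalently, [2n+j−1 choose n−1]_q = ∑_{r=1}^{n} (−1)^{r−1} · q^{r²−r} · [n choose r]_{q²} · [2n+j−2r−1 choose n−1]_q. -/

import Mathlib

open Polynomial

/-- The q-integer `[n]_q = 1 + q + ⋯ + q^{n−1}` as a polynomial in `ℤ[q]`
(with `[0]_q = 0`). -/
noncomputable def qIntP (n : ℕ) : Polynomial ℤ := ∑ i ∈ Finset.range n, Polynomial.X ^ i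

/-- The q-factorial `[n]_q! = [1]_q[2]_q⋯[n]_q` in `ℤ[q]`. -/
noncomputable def qFactP (n : ℕ) : Polynomial ℤ := ∏ i ∈ Finset.range n, qIntP (i + 1)

/-- The Gaussian binomial coefficient `[m choose k]_q = [m]_q!/([k]_q![m−k]_q!)`
as a polynomial in `ℤ[q]` (the division, by a monic polynomial, is exact),
and `0` if `k > m`. -/
noncomputable def qBinomP (m k : ℕ) : Polynomial ℤ :=
  if k ≤ m then qFactP m /ₘ (qFactP k * qFactP (m - k)) else 0

/-- The Gaussian binomial coefficient `[m choose k]_{q²}`, i.e. `[m choose k]_q`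
with `q` replaced by `q²`. -/
noncomputable def qBinomP2 (m k : ℕ) : Polynomial ℤ := (qBinomP m k).comp (Polynomial.X ^ 2)

/-! In `ℤ[q]⟦t⟧`, the q-binomial theorem at `q²` gives
`∑_r (-1)^r q^{r²-r} [n choose r]_{q²} t^{2r} = ∏_{i<n} (1 - q^{2i} t²)
  = ∏_{i<n} (1 + q^i t) (1 - q^i t)`,
and `∑_M [M+n-1 choose n-1]_q t^M` is the inverse of `∏_{i<n} (1 - q^i t)`. So the product of
these two series is the polynomial `∏_{i<n} (1 + q^i t)` of degree `n`, and its coefficient of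
`t^{n+j}`, which is the alternating sum of the theorem, vanishes for `j ≥ 1`. -/

open Finset

noncomputable def gaussBinom : ℕ → ℕ → ℤ[X]
  | _, 0 => 1
  | 0, _ + 1 => 0
  | m + 1, k + 1 => gaussBinom m k + X ^ (k + 1) * gaussBinom m (k + 1)

namespace gaussBinom

@[simp] lemma zero_right (m : ℕ) : gaussBinom m 0 = 1 := by cases m <;> rfl

lemma succ_succ (m k : ℕ) :
    gaussBinom (m + 1) (k + 1) = gaussBinom m k + X ^ (k + 1) * gaussBinom m (k + 1) := rfl

lemma eq_zero_of_lt : ∀ {m k : ℕ}, m < k → gaussBinom m k = 0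
  | 0, _ + 1, _ => rfl
  | m + 1, k + 1, h => by
    rw [succ_succ, eq_zero_of_lt (by omega), eq_zero_of_lt (by omega), mul_zero, add_zero]

@[simp] lemma self : ∀ m : ℕ, gaussBinom m m = 1
  | 0 => rfl
  | m + 1 => by rw [succ_succ, self m, eq_zero_of_lt (by omega), mul_zero, add_zero]

end gaussBinom

lemma qIntP_add (a b : ℕ) : qIntP (a + b) = qIntP a + X ^ a * qIntP b := by
  simp only [qIntP, sum_range_add, mul_sum, pow_add]

lemma qFactP_succ (m : ℕ) : qFactP (m + 1) = qFactP m * qIntP (m + 1) :=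
  prod_range_succ _ _

lemma qFactP_monic (n : ℕ) : (qFactP n).Monic :=
  monic_prod_of_monic _ _ fun i _ => monic_geom_sum_X i.succ_ne_zero

lemma qFactP_mul_qFactP_mul_gaussBinom : ∀ k d : ℕ,
    qFactP k * qFactP d * gaussBinom (k + d) k = qFactP (k + d)
  | 0, d => by simp [qFactP]
  | k + 1, 0 => by simp [qFactP]
  | k + 1, d + 1 => by
    have hleft := qFactP_mul_qFactP_mul_gaussBinom k (d + 1)
    have hright := qFactP_mul_qFactP_mul_gaussBinom (k + 1) d
    have hsplit : qIntP (k + (d + 1) + 1) = qIntP (k + 1) + X ^ (k + 1) * qIntP (d + 1) := by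
      rw [← qIntP_add]; ring_nf
    rw [show k + 1 + d = k + (d + 1) by omega] at hright
    rw [show k + 1 + (d + 1) = k + (d + 1) + 1 by omega, gaussBinom.succ_succ,
      qFactP_succ (k + (d + 1)), hsplit, qFactP_succ k, qFactP_succ d]
    rw [qFactP_succ d] at hleft
    rw [qFactP_succ k] at hright
    linear_combination qIntP (k + 1) * hleft + X ^ (k + 1) * qIntP (d + 1) * hright
termination_by k d => k + d

lemma qBinomP_eq_gaussBinom (m k : ℕ) : qBinomP m k = gaussBinom m k := by
  by_cases h : k ≤ m
  · obtain ⟨d, rfl⟩ := Nat.exists_eq_add_of_le h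
    rw [qBinomP, if_pos h, Nat.add_sub_cancel_left, ← qFactP_mul_qFactP_mul_gaussBinom,
      mul_divByMonic_cancel_left _ ((qFactP_monic k).mul (qFactP_monic d))]
  · rw [qBinomP, if_neg h, gaussBinom.eq_zero_of_lt (by omega)]

lemma Nat.choose_two_succ (k : ℕ) : (k + 1).choose 2 = k.choose 2 + k := by
  rw [Nat.choose_succ_succ', Nat.choose_one_right, add_comm]

lemma two_mul_choose_two (k : ℕ) : 2 * k.choose 2 = k ^ 2 - k := by
  rw [Nat.choose_two_right, Nat.mul_div_cancel' k.even_mul_pred_self.two_dvd, Nat.mul_sub_one, sq]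

/-- Gauss's q-binomial theorem, evaluated at `q = φ X`. -/
theorem prod_one_add_pow_mul_eq_sum {R : Type*} [CommRing R] (φ : ℤ[X] →+* R) (n : ℕ)
    (u : R) :
    ∏ i ∈ range n, (1 + φ X ^ i * u) =
      ∑ k ∈ range (n + 1), φ (X ^ k.choose 2 * gaussBinom n k) * u ^ k := by
  induction n generalizing u with
  | zero => simp
  | succ n ih =>
    set t : ℕ → R := fun k => φ (X ^ k.choose 2 * gaussBinom n k) * (φ X * u) ^ k
    have hprod :
        ∏ i ∈ range (n + 1), (1 + φ X ^ i * u) = (∑ k ∈ range (n + 1), t k) * (1 + u) := by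
      rw [prod_range_succ', ← ih]
      simp only [pow_succ, pow_zero, one_mul, mul_assoc]
    have hshift : ∑ k ∈ range (n + 1), t k = 1 + ∑ k ∈ range (n + 1), t (k + 1) := by
      have hlast : t (n + 1) = 0 := by simp [t, gaussBinom.eq_zero_of_lt]
      rw [sum_range_succ' t, sum_range_succ (fun k => t (k + 1)) n, hlast]
      simp [t, add_comm]
    calc ∏ i ∈ range (n + 1), (1 + φ X ^ i * u)
        = 1 + ∑ k ∈ range (n + 1), (t (k + 1) + t k * u) := by
          rw [hprod, mul_one_add, sum_add_distrib, ← sum_mul]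
          nth_rw 1 [hshift]
          ring
      _ = _ := by
          rw [sum_range_succ' _ (n + 1), add_comm]
          simp only [t, gaussBinom.succ_succ, map_add, map_mul, map_pow,
            Nat.choose_two_succ, gaussBinom.zero_right]
          congr 1
          · exact sum_congr rfl fun k _ => by ring
          · simp

lemma PowerSeries.coeff_C_mul_X_pow_mul {R : Type*} [CommRing R] (a : R) (k m : ℕ)
    (f : PowerSeries R) :
    PowerSeries.coeff m (PowerSeries.C a * PowerSeries.X ^ k * f) =
      if k ≤ m then a * PowerSeries.coeff (m - k) f else 0 := by
  rw [mul_assoc, PowerSeries.coeff_C_mul, PowerSeries.coeff_X_pow_mul', mul_ite, mul_zero]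

lemma coeff_prod_one_add_C_X_pow_mul_X {n m : ℕ} (h : n < m) :
    PowerSeries.coeff m
      (∏ i ∈ range n, (1 + PowerSeries.C (X : ℤ[X]) ^ i * PowerSeries.X)) = 0 := by
  rw [prod_one_add_pow_mul_eq_sum, map_sum]
  refine sum_eq_zero fun k hk => ?_
  rw [PowerSeries.coeff_C_mul_X_pow, if_neg]
  have := mem_range.mp hk
  omega

noncomputable def gaussBinomSeries (k : ℕ) : PowerSeries ℤ[X] :=
  PowerSeries.mk fun M => gaussBinom (M + k) k

lemma one_sub_mul_gaussBinomSeries_succ (k : ℕ) :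
    (1 - PowerSeries.C X ^ (k + 1) * PowerSeries.X) * gaussBinomSeries (k + 1) =
      gaussBinomSeries k := by
  refine PowerSeries.ext fun M => ?_
  rcases M with _ | M
  · simp [gaussBinomSeries]
  · rw [sub_mul, one_mul, map_sub, ← map_pow, mul_comm (PowerSeries.C _), mul_assoc,
      PowerSeries.coeff_succ_X_mul, PowerSeries.coeff_C_mul]
    simp only [gaussBinomSeries, PowerSeries.coeff_mk]
    rw [show M + 1 + (k + 1) = M + k + 1 + 1 by omega, gaussBinom.succ_succ,
      show M + (k + 1) = M + k + 1 by omega, show M + 1 + k = M + k + 1 by omega]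
    ring

lemma prod_one_sub_mul_gaussBinomSeries (k : ℕ) :
    (∏ i ∈ range (k + 1), (1 - PowerSeries.C X ^ i * PowerSeries.X)) * gaussBinomSeries k =
      1 := by
  induction k with
  | zero =>
    refine PowerSeries.ext fun M => ?_
    rcases M with _ | M <;> simp [gaussBinomSeries, sub_mul, PowerSeries.coeff_one]
  | succ k ih => rw [prod_range_succ, mul_assoc, one_sub_mul_gaussBinomSeries_succ, ih]

lemma sum_mul_gaussBinomSeries_eq_prod (n : ℕ) :
    (∑ r ∈ range (n + 1 + 1), PowerSeries.C ((-1) ^ r * X ^ (r ^ 2 - r) * qBinomP2 (n + 1) r) *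
        PowerSeries.X ^ (2 * r)) * gaussBinomSeries n =
      ∏ i ∈ range (n + 1), (1 + PowerSeries.C X ^ i * PowerSeries.X) := by
  set φ : ℤ[X] →+* PowerSeries ℤ[X] := PowerSeries.C.comp (compRingHom (X ^ 2))
  have hsq : ∏ i ∈ range (n + 1), (1 + φ X ^ i * -PowerSeries.X ^ 2) =
      (∏ i ∈ range (n + 1), (1 + PowerSeries.C X ^ i * PowerSeries.X)) *
        ∏ i ∈ range (n + 1), (1 - PowerSeries.C X ^ i * PowerSeries.X) := by
    rw [← prod_mul_distrib]
    refine prod_congr rfl fun i _ => ?_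
    rw [RingHom.comp_apply, coe_compRingHom_apply, X_comp, map_pow]
    ring
  have hterm (r : ℕ) : φ (X ^ r.choose 2 * gaussBinom (n + 1) r) * (-PowerSeries.X ^ 2) ^ r =
        PowerSeries.C ((-1) ^ r * X ^ (r ^ 2 - r) * qBinomP2 (n + 1) r) *
          PowerSeries.X ^ (2 * r) := by
    rw [RingHom.comp_apply, coe_compRingHom_apply, qBinomP2, qBinomP_eq_gaussBinom, mul_comp,
      X_pow_comp, ← pow_mul, two_mul_choose_two, neg_pow, pow_mul]
    simp only [map_mul, map_pow, map_neg, map_one]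
    ring
  rw [← sum_congr rfl fun r _ => hterm r, ← prod_one_add_pow_mul_eq_sum, hsq, mul_assoc,
    prod_one_sub_mul_gaussBinomSeries, mul_one]

lemma eq_sum_Icc_of_alternating_sum_eq_zero {R : Type*} [CommRing R] (f : ℕ → R) (n : ℕ)
    (h : ∑ r ∈ range (n + 1), (-1) ^ r * f r = 0) :
    f 0 = ∑ r ∈ Icc 1 n, (-1) ^ (r - 1) * f r := by
  rw [Nat.range_succ_eq_Icc_zero, ← insert_Icc_add_one_left_eq_Icc (Nat.zero_le n),
    sum_insert (by simp)] at h
  have hshift : ∑ r ∈ Icc 1 n, (-1) ^ (r - 1) * f r = -∑ r ∈ Icc 1 n, (-1) ^ r * f r := by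
    rw [← sum_neg_distrib]
    refine sum_congr rfl fun r hr => ?_
    obtain ⟨s, rfl⟩ := Nat.exists_eq_add_of_le' (mem_Icc.mp hr).1
    rw [Nat.add_sub_cancel, pow_succ]
    ring
  rw [hshift]
  linear_combination h

/-- For all `n ≥ 1` and `j ≥ 1`, in `ℤ[q]`:
`∑_{r=0}^{n} (−1)^r·q^{r²−r}·[n choose r]_{q²}·[2n+j−2r−1 choose n−1]_q = 0`;
equivalently `[2n+j−1 choose n−1]_q
 = ∑_{r=1}^{n} (−1)^{r−1}·q^{r²−r}·[n choose r]_{q²}·[2n+j−2r−1 choose n−1]_q`. -/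
theorem qBallot_sieve_identity (n j : ℕ) (hn : 1 ≤ n) (hj : 1 ≤ j) :
    (∑ r ∈ Finset.range (n + 1),
        (-1 : Polynomial ℤ) ^ r * Polynomial.X ^ (r ^ 2 - r) *
          qBinomP2 n r * qBinomP (2 * n + j - 2 * r - 1) (n - 1) = 0) ∧
    qBinomP (2 * n + j - 1) (n - 1) =
      ∑ r ∈ Finset.Icc 1 n,
        (-1 : Polynomial ℤ) ^ (r - 1) * Polynomial.X ^ (r ^ 2 - r) *
          qBinomP2 n r * qBinomP (2 * n + j - 2 * r - 1) (n - 1) := by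
  obtain ⟨m, rfl⟩ := Nat.exists_eq_add_of_le' hn
  have hsieve : ∑ r ∈ range (m + 1 + 1),
      (-1 : ℤ[X]) ^ r * X ^ (r ^ 2 - r) * qBinomP2 (m + 1) r *
        qBinomP (2 * (m + 1) + j - 2 * r - 1) (m + 1 - 1) = 0 := by
    have h := congrArg (PowerSeries.coeff (m + 1 + j)) (sum_mul_gaussBinomSeries_eq_prod m)
    rw [coeff_prod_one_add_C_X_pow_mul_X (by omega), sum_mul, map_sum] at h
    rw [← h]
    refine sum_congr rfl fun r hr => ?_
    rw [PowerSeries.coeff_C_mul_X_pow_mul, gaussBinomSeries, PowerSeries.coeff_mk]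
    have := mem_range.mp hr
    split_ifs
    · rw [qBinomP_eq_gaussBinom, Nat.add_sub_cancel,
        show 2 * (m + 1) + j - 2 * r - 1 = m + 1 + j - 2 * r + m by omega]
    · rw [qBinomP, if_neg (by omega), mul_zero]
  refine ⟨hsieve, ?_⟩
  have h := eq_sum_Icc_of_alternating_sum_eq_zero
    (fun r => X ^ (r ^ 2 - r) * qBinomP2 (m + 1) r *
      qBinomP (2 * (m + 1) + j - 2 * r - 1) (m + 1 - 1)) (m + 1)
    (by simpa only [mul_assoc] using hsieve)
  simpa [mul_assoc, qBinomP2, qBinomP_eq_gaussBinom] using h
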